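/- arXiv:1301.0917 — 4 statements merged into one kernel-verified Lean document; each statement's English description precedes it below -/
import Mathlib

section
/- Let s ≥ 1 be an integer and let n₁,…,n_m, d₁,…,d_m be natural numbers with n_i ≤ s for all i. Then Σ_{i=1}^m (s - n_i + 1)·d_i - (s+1)·(Σ_{i=1}^m d_i - 1 - ⌊(Σ_{i=1}^m n_i·d_i)/(s+1)⌋) > 0. -/
/-- The counting argument from the proof of the order-degree curve theorem:
with `1 ≤ s` and `n_i ≤ s` for all `i`, the number of variables exceeds the
number of equations, i.e.
`∑ (s - n_i + 1)·d_i - (s+1)·(∑ d_i - 1 - ⌊(∑ n_i·d_i)/(s+1)⌋) > 0`. -/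
theorem vars_exceed_eqns {m : ℕ} (s : ℕ) (hs : 1 ≤ s) (n d : Fin m → ℕ)
    (hn : ∀ i, n i ≤ s) :
    0 < ∑ i, ((s : ℤ) - (n i : ℤ) + 1) * (d i : ℤ)
        - ((s : ℤ) + 1) * (∑ i, (d i : ℤ) - 1 - (∑ i, (n i : ℤ) * (d i : ℤ)) / ((s : ℤ) + 1)) := by
  have h1 : ∑ i, ((s : ℤ) - (n i : ℤ) + 1) * (d i : ℤ)
      = ((s : ℤ) + 1) * ∑ i, (d i : ℤ) - ∑ i, (n i : ℤ) * (d i : ℤ) := by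
    rw [Finset.mul_sum, ← Finset.sum_sub_distrib]
    exact Finset.sum_congr rfl (fun i _ => by ring)
  set N := ∑ i, (n i : ℤ) * (d i : ℤ) with hN
  have hpos : (0 : ℤ) < (s : ℤ) + 1 := by positivity
  have hmod : N % ((s : ℤ) + 1) < (s : ℤ) + 1 := Int.emod_lt_of_pos N hpos
  have hdef : N % ((s : ℤ) + 1) = N - ((s : ℤ) + 1) * (N / ((s : ℤ) + 1)) := Int.emod_def N _
  rw [h1]
  linarith [mul_comm ((s : ℤ) + 1) (N / ((s : ℤ) + 1))]
end

section
/- (Shift case, order bound for removing operators.) Let K[x][∂] be the Ore algebra with σ(x) = x+1 and δ = 0. Let L = ℓ₀ + ℓ₁∂ + ⋯ + ℓ_r∂^r with ℓ₀, ℓ_r ≠ 0, let p be an irreducible factor of ℓ_r, and suppose p^k is removable from L for some k ≥ 1. Let n ∈ ℕ be such that gcd(σⁿ(p), ℓ₀) ≠ 1 and gcd(σᵐ(p), ℓ₀) = 1 for all m > n. Then p^k is removable from L at order n. -/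
open Polynomial

/-- The Ore (skew polynomial) algebra `A[∂; σ, δ]`: a ring whose elements are
finite sums `∑ ι(aₙ)·∂ⁿ` with coefficients `aₙ ∈ A`, uniquely determined, and
with commutation rule `∂·f = σ(f)·∂ + δ(f)`; `δ` is a `σ`-derivation. -/
structure OreAlgebra (A : Type*) [CommRing A] (σ : A ≃+* A) (δ : A → A) where
  carrier : Type*
  [ring : Ring carrier]
  ι : A →+* carrier
  d : carrier
  coeff : carrier → ℕ → A
  coeff_add : ∀ x y n, coeff (x + y) n = coeff x n + coeff y n
  coeff_iota_dpow : ∀ (a : A) (i n : ℕ), coeff (ι a * d ^ i) n = if i = n then a else 0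
  support_finite : ∀ x, Set.Finite {n | coeff x n ≠ 0}
  coeff_ext : ∀ x y, (∀ n, coeff x n = coeff y n) → x = y
  repr_eq : ∀ x, x = ∑ n ∈ (support_finite x).toFinset, ι (coeff x n) * d ^ n
  comm_rule : ∀ a : A, d * ι a = ι (σ a) * d + ι (δ a)
  delta_rule : ∀ a b : A, δ (a * b) = δ a * b + σ a * δ b

attribute [instance] OreAlgebra.ring

/-- `x` has order (degree in `∂`) exactly `n`. -/
def OreAlgebra.HasOrder {A : Type*} [CommRing A] {σ : A ≃+* A} {δ : A → A}
    (O : OreAlgebra A σ δ) (x : O.carrier) (n : ℕ) : Prop :=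
  O.coeff x n ≠ 0 ∧ ∀ m, n < m → O.coeff x m = 0

/-- An operator in `K(x)[∂]` has polynomial coefficients, i.e. lies in `K[x][∂]`. -/
def OreAlgebra.IsPoly {K : Type*} [Field K] {σ : RatFunc K ≃+* RatFunc K}
    {δ : RatFunc K → RatFunc K} (O : OreAlgebra (RatFunc K) σ δ) (x : O.carrier) : Prop :=
  ∀ i, ∃ q : Polynomial K, O.coeff x i = algebraMap (Polynomial K) (RatFunc K) q

/-- `P ∈ K(x)[∂]` is a `p`-removing operator of order `n` for `L` (where `L` has
order `rL`): `deg_∂(P) = n`, `PL ∈ K[x][∂]`, and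
`σ^{-n}(lc_∂(PL)) = (w/(v·p))·lc_∂(L)` for some `v, w ∈ K[x]`, `v ≠ 0`,
with `gcd(p, w) = 1`. -/
def OreAlgebra.IsRemoving {K : Type*} [Field K] {σ : RatFunc K ≃+* RatFunc K}
    {δ : RatFunc K → RatFunc K} (O : OreAlgebra (RatFunc K) σ δ)
    (p : Polynomial K) (L : O.carrier) (rL : ℕ) (P : O.carrier) (n : ℕ) : Prop :=
  O.HasOrder P n ∧ O.IsPoly (P * L) ∧
  ∃ v w : Polynomial K, v ≠ 0 ∧ IsCoprime p w ∧
    (⇑σ.symm)^[n] (O.coeff (P * L) (n + rL)) * algebraMap (Polynomial K) (RatFunc K) (v * p)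
      = algebraMap (Polynomial K) (RatFunc K) w * O.coeff L rL

/-!
Left multiplication by `∂` turns a `q`-removing operator of order `m` into one of order `m + 1`,
so removability at some order gives removability at every larger order.

Conversely, let `P` be `q`-removing of order `m + 1`, `b` its constant coefficient and `D` the
denominator of `b`. Since `(PL)₀ = b ℓ₀` is a polynomial, `D ∣ ℓ₀`. Write `D P - D b = ∂ Q`; then
`Q` has order `m`, `∂ (QL) = D PL - D b L` shows that `QL` has polynomial coefficients, and the
leading coefficient identity holds for `Q` with `w` replaced by `D(x - m - 1) w`. This stays
coprime to `q` as long as `q(x + m + 1)` is coprime to `ℓ₀`, so the coprimality for all `m > n`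
lets one descend from any order to `n`.
-/

lemma IsCoprime.of_comp_X_add_C {K : Type*} [Field K] {a b : K[X]} {c : K}
    (h : IsCoprime (a.comp (X + C c)) b) :
    IsCoprime a (b.comp (X - C c)) := by
  have hshift : (X + C c).comp (X - C c) = X := by rw [add_comp, X_comp, C_comp, sub_add_cancel]
  have := h.map (compRingHom (X - C c))
  rwa [coe_compRingHom_apply, coe_compRingHom_apply, comp_assoc, hshift, comp_X] at this

def IsShift {K : Type*} [Field K] (σ : RatFunc K ≃+* RatFunc K) : Prop :=
  ∀ q : K[X], σ (algebraMap K[X] (RatFunc K) q) = algebraMap K[X] (RatFunc K) (q.comp (X + 1))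

lemma IsShift.iterate_symm_algebraMap {K : Type*} [Field K]
    {σ : RatFunc K ≃+* RatFunc K} (hσ : IsShift σ) (m : ℕ) (q : K[X]) :
    (⇑σ.symm)^[m] (algebraMap K[X] (RatFunc K) q)
      = algebraMap K[X] (RatFunc K) (q.comp (X - C (m : K))) := by
  induction m generalizing q with
  | zero => simp
  | succ m ih =>
    have hsymm : σ.symm (algebraMap K[X] (RatFunc K) q)
        = algebraMap K[X] (RatFunc K) (q.comp (X - 1)) := by
      rw [σ.symm_apply_eq, hσ, comp_assoc, sub_comp, X_comp, one_comp, add_sub_cancel_right, comp_X]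
    rw [Function.iterate_succ_apply, hsymm, ih, comp_assoc, sub_comp, X_comp, one_comp,
      Nat.cast_succ, C_add, C_1, sub_sub]

namespace OreAlgebra

section Coefficients

variable {A : Type*} [CommRing A] {σ : A ≃+* A} {δ : A → A} (O : OreAlgebra A σ δ)

def coeffHom (n : ℕ) : O.carrier →+ A :=
  AddMonoidHom.mk' (O.coeff · n) fun x y => O.coeff_add x y n

lemma coeff_zero (n : ℕ) : O.coeff 0 n = 0 :=
  (O.coeffHom n).map_zero

lemma coeff_sub (x y : O.carrier) (n : ℕ) : O.coeff (x - y) n = O.coeff x n - O.coeff y n :=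
  (O.coeffHom n).map_sub x y

lemma coeff_sum {β : Type*} (s : Finset β) (f : β → O.carrier) (n : ℕ) :
    O.coeff (∑ i ∈ s, f i) n = ∑ i ∈ s, O.coeff (f i) n :=
  map_sum (O.coeffHom n) f s

lemma coeff_eq_zero_of_notMem_support {x : O.carrier} {n : ℕ}
    (h : n ∉ (O.support_finite x).toFinset) : O.coeff x n = 0 := by
  simpa using h

lemma coeff_iota_zero (a : A) : O.coeff (O.ι a) 0 = a := by
  simpa using O.coeff_iota_dpow a 0 0

lemma coeff_iota_succ (a : A) (n : ℕ) : O.coeff (O.ι a) (n + 1) = 0 := by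
  simpa using O.coeff_iota_dpow a 0 (n + 1)

lemma coeff_sum_iota_mul_dpow (s : Finset ℕ) (c : ℕ → A) (n : ℕ) :
    O.coeff (∑ i ∈ s, O.ι (c i) * O.d ^ i) n = if n ∈ s then c n else 0 := by
  simp only [coeff_sum, coeff_iota_dpow, Finset.sum_ite_eq']

lemma coeff_iota_mul (a : A) (y : O.carrier) (n : ℕ) :
    O.coeff (O.ι a * y) n = a * O.coeff y n := by
  have hy : O.ι a * y = ∑ i ∈ (O.support_finite y).toFinset, O.ι (a * O.coeff y i) * O.d ^ i := by
    conv_lhs => rw [O.repr_eq y]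
    simp only [Finset.mul_sum, ← mul_assoc, map_mul]
  rw [hy, coeff_sum_iota_mul_dpow]
  split_ifs with hn
  · rfl
  · rw [O.coeff_eq_zero_of_notMem_support hn, mul_zero]

variable {O}

lemma HasOrder.iota_mul [NoZeroDivisors A] {a : A} {y : O.carrier} {m : ℕ} (ha : a ≠ 0)
    (hy : O.HasOrder y m) : O.HasOrder (O.ι a * y) m :=
  ⟨by rw [coeff_iota_mul]; exact mul_ne_zero ha hy.1,
    fun t ht => by rw [coeff_iota_mul, hy.2 t ht, mul_zero]⟩

lemma HasOrder.sub_iota {y : O.carrier} {m : ℕ} (a : A) (hy : O.HasOrder y (m + 1)) :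
    O.HasOrder (y - O.ι a) (m + 1) := by
  have hcoeff : ∀ t, O.coeff (y - O.ι a) (t + 1) = O.coeff y (t + 1) := fun t => by
    rw [coeff_sub, coeff_iota_succ, sub_zero]
  refine ⟨by rw [hcoeff]; exact hy.1, fun t ht => ?_⟩
  obtain ⟨t, rfl⟩ := Nat.exists_eq_succ_of_ne_zero (by omega : t ≠ 0)
  rw [hcoeff, hy.2 _ ht]

end Coefficients

section ZeroDerivation

variable {A : Type*} [CommRing A] {σ : A ≃+* A} (O : OreAlgebra A σ (fun _ => 0))

lemma d_mul_eq_sum (y : O.carrier) :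
    O.d * y = ∑ i ∈ (O.support_finite y).toFinset, O.ι (σ (O.coeff y i)) * O.d ^ (i + 1) := by
  conv_lhs => rw [O.repr_eq y]
  refine Finset.mul_sum _ _ _ |>.trans (Finset.sum_congr rfl fun i _ => ?_)
  rw [← mul_assoc, O.comm_rule, map_zero, add_zero, mul_assoc, ← pow_succ']

lemma coeff_d_mul_zero (y : O.carrier) : O.coeff (O.d * y) 0 = 0 := by
  simp [d_mul_eq_sum, coeff_sum, coeff_iota_dpow]

lemma coeff_d_mul_succ (y : O.carrier) (n : ℕ) :
    O.coeff (O.d * y) (n + 1) = σ (O.coeff y n) := by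
  simp only [d_mul_eq_sum, coeff_sum, coeff_iota_dpow, add_left_inj, Finset.sum_ite_eq']
  split_ifs with hn
  · rfl
  · rw [O.coeff_eq_zero_of_notMem_support hn, map_zero]

lemma coeff_dpow_mul_zero (i : ℕ) (y : O.carrier) :
    O.coeff (O.d ^ i * y) 0 = if i = 0 then O.coeff y 0 else 0 := by
  cases i with
  | zero => simp
  | succ i => rw [pow_succ', mul_assoc, coeff_d_mul_zero, if_neg i.succ_ne_zero]

lemma coeff_mul_zero (x y : O.carrier) : O.coeff (x * y) 0 = O.coeff x 0 * O.coeff y 0 := by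
  conv_lhs => rw [O.repr_eq x]
  simp only [Finset.sum_mul, coeff_sum, mul_assoc, coeff_iota_mul, coeff_dpow_mul_zero,
    mul_ite, mul_zero, Finset.sum_ite_eq']
  split_ifs with h0
  · rfl
  · rw [O.coeff_eq_zero_of_notMem_support h0, zero_mul]

variable {O} in
lemma hasOrder_d_mul_iff {y : O.carrier} {m : ℕ} :
    O.HasOrder (O.d * y) (m + 1) ↔ O.HasOrder y m := by
  refine ⟨fun h => ⟨fun hy => h.1 ?_, fun t ht => ?_⟩, fun h => ⟨?_, fun t ht => ?_⟩⟩
  · rw [coeff_d_mul_succ, hy, map_zero]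
  · simpa [coeff_d_mul_succ] using h.2 (t + 1) (by omega)
  · rw [coeff_d_mul_succ]; exact σ.map_ne_zero_iff.mpr h.1
  · obtain ⟨t, rfl⟩ := Nat.exists_eq_succ_of_ne_zero (by omega : t ≠ 0)
    rw [coeff_d_mul_succ, h.2 t (by omega), map_zero]

lemma exists_d_mul_eq_sub_iota_coeff_zero (y : O.carrier) :
    ∃ z, O.d * z = y - O.ι (O.coeff y 0) := by
  obtain ⟨N, hN⟩ := (O.support_finite y).bddAbove
  refine ⟨∑ i ∈ Finset.range N, O.ι (σ.symm (O.coeff y (i + 1))) * O.d ^ i, O.coeff_ext _ _ ?_⟩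
  rintro (_ | t)
  · rw [coeff_d_mul_zero, coeff_sub, coeff_iota_zero, sub_self]
  · rw [coeff_d_mul_succ, coeff_sum_iota_mul_dpow, coeff_sub, coeff_iota_succ, sub_zero]
    split_ifs with ht
    · exact σ.apply_symm_apply _
    · have : O.coeff y (t + 1) = 0 := by
        by_contra hne
        exact ht (Finset.mem_range.mpr (by have := hN hne; omega))
      rw [this, map_zero]

end ZeroDerivation

section PolynomialCoefficients

variable {K : Type*} [Field K] {σ : RatFunc K ≃+* RatFunc K} {δ : RatFunc K → RatFunc K}
  {O : OreAlgebra (RatFunc K) σ δ}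

lemma IsPoly.sub {x y : O.carrier} (hx : O.IsPoly x) (hy : O.IsPoly y) : O.IsPoly (x - y) := by
  intro i
  obtain ⟨a, ha⟩ := hx i
  obtain ⟨b, hb⟩ := hy i
  exact ⟨a - b, by rw [coeff_sub, ha, hb, map_sub]⟩

lemma IsPoly.iota_algebraMap_mul {y : O.carrier} (q : K[X]) (hy : O.IsPoly y) :
    O.IsPoly (O.ι (algebraMap K[X] (RatFunc K) q) * y) := by
  intro i
  obtain ⟨b, hb⟩ := hy i
  exact ⟨q * b, by rw [coeff_iota_mul, hb, map_mul]⟩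

end PolynomialCoefficients

section Shift

variable {K : Type*} [Field K] {σ : RatFunc K ≃+* RatFunc K}
  {O : OreAlgebra (RatFunc K) σ (fun _ => 0)}

lemma denom_coeff_zero_dvd {P L : O.carrier} {ℓ0 : K[X]} (hPL : O.IsPoly (P * L))
    (h0 : O.coeff L 0 = algebraMap K[X] (RatFunc K) ℓ0) (h0ne : ℓ0 ≠ 0) :
    (O.coeff P 0).denom ∣ ℓ0 := by
  obtain ⟨c, hc⟩ := hPL 0
  refine (RatFunc.denom_dvd h0ne).mpr ⟨c, ?_⟩
  rw [eq_div_iff (RatFunc.algebraMap_ne_zero h0ne), ← h0, ← coeff_mul_zero, hc]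

lemma IsPoly.d_mul (hσ : IsShift σ) {y : O.carrier} (hy : O.IsPoly y) :
    O.IsPoly (O.d * y) := by
  rintro (_ | i)
  · exact ⟨0, by rw [coeff_d_mul_zero, map_zero]⟩
  · obtain ⟨b, hb⟩ := hy i
    exact ⟨b.comp (X + 1), by rw [coeff_d_mul_succ, hb, hσ b]⟩

lemma IsPoly.of_d_mul (hσ : IsShift σ) {y : O.carrier} (hy : O.IsPoly (O.d * y)) :
    O.IsPoly y := by
  intro i
  obtain ⟨b, hb⟩ := hy (i + 1)
  refine ⟨b.comp (X - C ((1 : ℕ) : K)), ?_⟩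
  rw [← hσ.iterate_symm_algebraMap 1, ← hb, coeff_d_mul_succ,
    Function.iterate_one, σ.symm_apply_apply]

lemma IsRemoving.d_mul (hσ : IsShift σ) {q : K[X]} {L P : O.carrier} {r m : ℕ}
    (hP : O.IsRemoving q L r P m) : O.IsRemoving q L r (O.d * P) (m + 1) := by
  obtain ⟨hord, hpoly, v, w, hv, hw, heq⟩ := hP
  refine ⟨hasOrder_d_mul_iff.mpr hord, mul_assoc O.d P L ▸ hpoly.d_mul hσ, v, w, hv, hw, ?_⟩
  rwa [mul_assoc, Nat.add_right_comm, coeff_d_mul_succ, Function.iterate_succ_apply,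
    σ.symm_apply_apply]

lemma IsRemoving.exists_pred (hσ : IsShift σ) {q ℓ0 : K[X]} {L P : O.carrier} {r m : ℕ}
    (hL : O.IsPoly L) (hLo : O.HasOrder L r)
    (h0 : O.coeff L 0 = algebraMap K[X] (RatFunc K) ℓ0) (h0ne : ℓ0 ≠ 0)
    (hcop : IsCoprime (q.comp (X + C ((m + 1 : ℕ) : K))) ℓ0)
    (hP : O.IsRemoving q L r P (m + 1)) : ∃ P', O.IsRemoving q L r P' m := by
  obtain ⟨hord, hpoly, v, w, hv, hw, heq⟩ := hP
  set b := O.coeff P 0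
  have hdvd : b.denom ∣ ℓ0 := denom_coeff_zero_dvd hpoly h0 h0ne
  have hnum : algebraMap K[X] (RatFunc K) b.denom * b = algebraMap K[X] (RatFunc K) b.num := by
    rw [mul_comm, ← eq_div_iff (RatFunc.algebraMap_ne_zero b.denom_ne_zero), b.num_div_denom]
  obtain ⟨Q, hQ⟩ := O.exists_d_mul_eq_sub_iota_coeff_zero
    (O.ι (algebraMap K[X] (RatFunc K) b.denom) * P)
  rw [coeff_iota_mul, hnum] at hQ
  have hQL : O.d * (Q * L) = O.ι (algebraMap K[X] (RatFunc K) b.denom) * (P * L)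
      - O.ι (algebraMap K[X] (RatFunc K) b.num) * L := by
    rw [← mul_assoc, hQ, sub_mul, mul_assoc]
  have hlead : O.coeff (Q * L) (m + r)
      = σ.symm (algebraMap K[X] (RatFunc K) b.denom * O.coeff (P * L) (m + 1 + r)) := by
    rw [σ.eq_symm_apply, ← coeff_d_mul_succ, hQL, coeff_sub, coeff_iota_mul, coeff_iota_mul,
      hLo.2 _ (by omega), mul_zero, sub_zero, Nat.add_right_comm]
  have hQord : O.HasOrder Q m :=
    hasOrder_d_mul_iff.mp <| hQ ▸
      (hord.iota_mul (RatFunc.algebraMap_ne_zero b.denom_ne_zero)).sub_iota _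
  have hQpoly : O.IsPoly (Q * L) :=
    (hQL ▸ (hpoly.iota_algebraMap_mul _).sub (hL.iota_algebraMap_mul _)).of_d_mul hσ
  refine ⟨Q, hQord, hQpoly, v, b.denom.comp (X - C ((m + 1 : ℕ) : K)) * w, hv, ?_, ?_⟩
  · exact (hcop.of_isCoprime_of_dvd_right hdvd).of_comp_X_add_C.mul_right hw
  · rw [hlead, ← Function.iterate_succ_apply, iterate_map_mul, hσ.iterate_symm_algebraMap,
      mul_assoc, heq, ← mul_assoc, map_mul]

lemma exists_isRemoving_of_le (hσ : IsShift σ) {q : K[X]} {L : O.carrier} {r m m' : ℕ}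
    (hm : m ≤ m') (h : ∃ P, O.IsRemoving q L r P m) : ∃ P, O.IsRemoving q L r P m' := by
  induction m', hm using Nat.le_induction with
  | base => exact h
  | succ m' _ ih =>
    obtain ⟨P, hP⟩ := ih
    exact ⟨O.d * P, hP.d_mul hσ⟩

lemma exists_isRemoving_of_ge (hσ : IsShift σ) {q ℓ0 : K[X]} {L : O.carrier} {r n m : ℕ}
    (hL : O.IsPoly L) (hLo : O.HasOrder L r)
    (h0 : O.coeff L 0 = algebraMap K[X] (RatFunc K) ℓ0) (h0ne : ℓ0 ≠ 0)
    (hcop : ∀ m', n < m' → IsCoprime (q.comp (X + C (m' : K))) ℓ0)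
    (hm : n ≤ m) (h : ∃ P, O.IsRemoving q L r P m) : ∃ P, O.IsRemoving q L r P n := by
  induction m, hm using Nat.le_induction with
  | base => exact h
  | succ m hm ih =>
    obtain ⟨P, hP⟩ := h
    exact ih (hP.exists_pred hσ hL hLo h0 h0ne (hcop _ (by omega)))

end Shift

end OreAlgebra

theorem shift_removing_order_bound_general {K : Type*} [Field K]
    {σ : RatFunc K ≃+* RatFunc K}
    (hσ : ∀ q : Polynomial K, σ (algebraMap (Polynomial K) (RatFunc K) q)
        = algebraMap (Polynomial K) (RatFunc K) (q.comp (X + 1)))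
    (O : OreAlgebra (RatFunc K) σ (fun _ => 0))
    (L : O.carrier) (r : ℕ) (hL : O.IsPoly L) (hLo : O.HasOrder L r)
    (ℓ0 : Polynomial K)
    (h0 : O.coeff L 0 = algebraMap (Polynomial K) (RatFunc K) ℓ0) (h0ne : ℓ0 ≠ 0)
    (p : Polynomial K)
    (k : ℕ)
    (hrem : ∃ (n' : ℕ) (P : O.carrier), O.IsRemoving (p ^ k) L r P n')
    (n : ℕ)
    (hn2 : ∀ m : ℕ, n < m → IsCoprime (p.comp (X + C (m : K))) ℓ0) :
    ∃ P : O.carrier, O.IsRemoving (p ^ k) L r P n := by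
  obtain ⟨n', hrem⟩ := hrem
  have hcop : ∀ m : ℕ, n < m → IsCoprime ((p ^ k).comp (X + C (m : K))) ℓ0 := fun m hm => by
    rw [pow_comp]
    exact (hn2 m hm).pow_left
  rcases le_total n' n with hle | hle
  · exact OreAlgebra.exists_isRemoving_of_le hσ hle hrem
  · exact OreAlgebra.exists_isRemoving_of_ge hσ hL hLo h0 h0ne hcop hle hrem

/-- Lemma 2 (shift case, order bound): in the Ore algebra with `σ` the shift
`x ↦ x+1` and `δ = 0`, if `L = ℓ₀ + ⋯ + ℓ_r∂^r` with `ℓ₀, ℓ_r ≠ 0`, `p` is an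
irreducible factor of `ℓ_r`, `p^k` is removable from `L` for some `k ≥ 1`, and
`n` satisfies `gcd(σⁿ(p), ℓ₀) ≠ 1` and `gcd(σᵐ(p), ℓ₀) = 1` for all `m > n`,
then `p^k` is removable from `L` at order `n`. -/
theorem shift_removing_order_bound {K : Type*} [Field K] [CharZero K]
    {σ : RatFunc K ≃+* RatFunc K}
    (hσ : ∀ q : Polynomial K, σ (algebraMap (Polynomial K) (RatFunc K) q)
        = algebraMap (Polynomial K) (RatFunc K) (q.comp (X + 1)))
    (O : OreAlgebra (RatFunc K) σ (fun _ => 0))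
    (L : O.carrier) (r : ℕ) (hL : O.IsPoly L) (hLo : O.HasOrder L r)
    (ℓ0 ℓr : Polynomial K)
    (h0 : O.coeff L 0 = algebraMap (Polynomial K) (RatFunc K) ℓ0) (h0ne : ℓ0 ≠ 0)
    (hr : O.coeff L r = algebraMap (Polynomial K) (RatFunc K) ℓr) (hrne : ℓr ≠ 0)
    (p : Polynomial K) (hp : Irreducible p) (hpdvd : p ∣ ℓr)
    (k : ℕ) (hk : 1 ≤ k)
    (hrem : ∃ (n' : ℕ) (P : O.carrier), O.IsRemoving (p ^ k) L r P n')
    (n : ℕ)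
    (hn1 : ¬ IsCoprime (p.comp (X + C (n : K))) ℓ0)
    (hn2 : ∀ m : ℕ, n < m → IsCoprime (p.comp (X + C (m : K))) ℓ0) :
    ∃ P : O.carrier, O.IsRemoving (p ^ k) L r P n :=
  shift_removing_order_bound_general hσ O L r hL hLo ℓ0 h0 h0ne p k hrem n hn2
end

section
/- In the setting of the shift-case exponent bound proof: let v ∈ ℕ, e, k, n ∈ ℕ with e > k + n·v, and let q be a nonzero polynomial. Suppose polynomials b_n, b_{n-1}, …, b_0 satisfy: q^{e-k} divides b_n, and for each i < n there are polynomials c_i (with q-adic valuation of c_i at most v) and t_i such that q^e·t_i = b_i·c_i + (terms each divisible by q^{(i+1)v+1}). Then by downward induction q^{iv+1} divides b_i for all i = n, n-1, …, 0; in particular q divides gcd(b_0, …, b_n). -/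
theorem Prime.pow_dvd_of_pow_add_dvd_mul {M : Type*} [CommMonoidWithZero M] [IsCancelMulZero M]
    {p a c : M} (hp : Prime p) {m v : ℕ} (hc : ¬ p ^ (v + 1) ∣ c) (h : p ^ (m + v) ∣ a * c) :
    p ^ m ∣ a := by
  have hcv : emultiplicity p c ≤ v :=
    (ENat.lt_add_one_iff (ENat.natCast_ne_top v)).mp
      (by exact_mod_cast emultiplicity_lt_iff_not_dvd.mpr hc)
  have hac : (m + v : ℕ∞) ≤ emultiplicity p a + v := by
    grw [← hcv, ← emultiplicity_mul hp]
    exact_mod_cast le_emultiplicity_of_pow_dvd h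
  exact pow_dvd_of_le_emultiplicity ((ENat.add_le_add_iff_right (ENat.natCast_ne_top v)).mp hac)

/-- The induction at the heart of the shift-case exponent bound proof:
`q` irreducible, `e > k + n·v`, `q^{e-k} ∣ b_n`, and for each `i < n` there are
`c_i` (nonzero with `q`-adic valuation at most `v`), `s_i` divisible by
`q^{(i+1)v+1}`, and `t_i` with `q^e·t_i = b_i·c_i + s_i`. Then
`q^{iv+1} ∣ b_i` for all `i ≤ n`; in particular `q` divides every `b_i`
(hence `q ∣ gcd(b_0,…,b_n)`). -/
theorem valuation_induction {K : Type*} [Field K] (q : Polynomial K) (hq : Irreducible q)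
    (v e k n : ℕ) (he : k + n * v < e)
    (b : ℕ → Polynomial K)
    (hbn : q ^ (e - k) ∣ b n)
    (hstep : ∀ i, i < n → ∃ c s t : Polynomial K, c ≠ 0 ∧ ¬ q ^ (v + 1) ∣ c ∧
      q ^ ((i + 1) * v + 1) ∣ s ∧ q ^ e * t = b i * c + s) :
    (∀ i, i ≤ n → q ^ (i * v + 1) ∣ b i) ∧ ∀ i, i ≤ n → q ∣ b i := by
  have hdvd : ∀ i, i ≤ n → q ^ (i * v + 1) ∣ b i := by
    intro i hi
    rcases hi.eq_or_lt with rfl | hin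
    · exact (pow_dvd_pow q (by omega)).trans hbn
    obtain ⟨c, s, t, -, hc, hs, heq⟩ := hstep i hin
    have hie : (i + 1) * v + 1 ≤ e := by nlinarith
    have hbc : q ^ (i * v + 1 + v) ∣ b i * c := by
      rw [show i * v + 1 + v = (i + 1) * v + 1 by ring, ← dvd_add_left hs, ← heq]
      exact (pow_dvd_pow q hie).mul_right t
    exact hq.prime.pow_dvd_of_pow_add_dvd_mul hc hbc
  exact ⟨hdvd, fun i hi => (dvd_pow_self q (Nat.succ_ne_zero _)).trans (hdvd i hi)⟩
end

section
/- (Nonvanishing of the combined leading coefficient.) Let σ be an automorphism of K[x], let p₁,…,p_m ∈ K[x] and n₁,…,n_m, k ∈ ℕ be such that the polynomials σ^{k+n_i}(p_i) are pairwise coprime, and let q be a common multiple divisible by each σ^{k+n_i}(p_i). If q_{1},…,q_{m} ∈ K[x] satisfy deg(q_i) < deg(p_i) and are not all zero, then Σ_{i=1}^m q_i·(q/σ^{k+n_i}(p_i)) ≠ 0, and moreover this sum has degree strictly less than deg(q) whenever q = Π_i σ^{k+n_i}(p_i). -/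
open Polynomial

/-- Nonvanishing of the combined leading coefficient: `σ` a degree-preserving
automorphism of `K[x]`, the `σ^{k+n_i}(p_i)` pairwise coprime, and `q` a common
multiple with `q = σ^{k+n_i}(p_i)·c_i`. If `deg(q_i) < deg(p_i)` and the `q_i`
are not all zero, then `∑ q_i·(q/σ^{k+n_i}(p_i)) ≠ 0`; moreover, when
`q = ∏ σ^{k+n_i}(p_i)`, this sum has degree strictly less than `deg(q)`. -/
theorem combined_lc_nonzero {K : Type*} [Field K]
    (σ : Polynomial K ≃+* Polynomial K)
    (hσdeg : ∀ f : Polynomial K, (σ f).natDegree = f.natDegree)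
    (m : ℕ) (p : Fin m → Polynomial K) (hp : ∀ i, p i ≠ 0)
    (n : Fin m → ℕ) (k : ℕ)
    (hcop : ∀ i j, i ≠ j → IsCoprime ((⇑σ)^[k + n i] (p i)) ((⇑σ)^[k + n j] (p j)))
    (q : Polynomial K) (hq : q ≠ 0)
    (c : Fin m → Polynomial K)
    (hc : ∀ i, q = (⇑σ)^[k + n i] (p i) * c i)
    (qs : Fin m → Polynomial K)
    (hdeg : ∀ i, (qs i).degree < (p i).degree)
    (hne : ∃ i, qs i ≠ 0) :
    (∑ i, qs i * c i) ≠ 0 ∧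
    (q = ∏ i, (⇑σ)^[k + n i] (p i) → (∑ i, qs i * c i).degree < q.degree) := by
  set P : Fin m → Polynomial K := fun i => (⇑σ)^[k + n i] (p i) with hPdef
  -- iterate of σ preserves nonzeroness and natDegree
  have hiter : ∀ (t : ℕ) (f : Polynomial K), f ≠ 0 →
      (⇑σ)^[t] f ≠ 0 ∧ ((⇑σ)^[t] f).natDegree = f.natDegree := by
    intro t
    induction t with
    | zero => intro f hf; simp [hf]
    | succ t ih =>
      intro f hf
      obtain ⟨h1, h2⟩ := ih f hf
      rw [Function.iterate_succ_apply']
      constructor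
      · intro h
        exact h1 (σ.injective (by simpa using h))
      · rw [hσdeg, h2]
  have hP0 : ∀ i, P i ≠ 0 := fun i => (hiter _ _ (hp i)).1
  have hPdeg : ∀ i, (P i).degree = (p i).degree := by
    intro i
    rw [degree_eq_natDegree (hP0 i), degree_eq_natDegree (hp i), (hiter _ _ (hp i)).2]
  have hcop' : ∀ i j : Fin m, i ≠ j → IsCoprime (P i) (P j) := hcop
  -- D i = product of P j over j ≠ i
  set D : Fin m → Polynomial K := fun i => ∏ j ∈ Finset.univ.erase i, P j with hDdef
  have hPD : ∀ i, P i * D i = ∏ j, P j := fun i =>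
    Finset.mul_prod_erase Finset.univ P (Finset.mem_univ i)
  -- ∏ P ∣ q
  have hprod_dvd : (∏ j, P j) ∣ q := by
    apply Finset.prod_dvd_of_coprime
    · intro i _ j _ hij
      exact hcop' i j hij
    · intro i _
      exact ⟨c i, hc i⟩
  obtain ⟨r, hr⟩ := hprod_dvd
  have hr0 : r ≠ 0 := by
    intro h; rw [h, mul_zero] at hr; exact hq hr
  have hcD : ∀ i, c i = D i * r := by
    intro i
    apply mul_left_cancel₀ (hP0 i)
    rw [← hc i, hr, ← hPD i, mul_assoc]
  have hcopD : ∀ i, IsCoprime (P i) (D i) := by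
    intro i
    apply IsCoprime.prod_right
    intro j hj
    exact hcop' i j (Ne.symm (Finset.ne_of_mem_erase hj))
  obtain ⟨i₀, hi₀⟩ := hne
  -- the key nonvanishing
  have hT : (∑ i, qs i * D i) ≠ 0 := by
    intro hT0
    have hsplit : qs i₀ * D i₀ + ∑ i ∈ Finset.univ.erase i₀, qs i * D i = 0 := by
      rw [Finset.add_sum_erase Finset.univ (fun i => qs i * D i) (Finset.mem_univ i₀)]
      exact hT0
    have hdvd : P i₀ ∣ qs i₀ * D i₀ := by
      have h1 : P i₀ ∣ ∑ i ∈ Finset.univ.erase i₀, qs i * D i := by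
        apply Finset.dvd_sum
        intro i hi
        have : P i₀ ∣ D i := by
          apply Finset.dvd_prod_of_mem
          exact Finset.mem_erase.2 ⟨Ne.symm (Finset.ne_of_mem_erase hi), Finset.mem_univ _⟩
        exact Dvd.dvd.mul_left this (qs i)
      rw [eq_neg_of_add_eq_zero_left hsplit]
      exact h1.neg_right
    have hdvd' : P i₀ ∣ qs i₀ := (hcopD i₀).dvd_of_dvd_mul_right hdvd
    have := Polynomial.degree_le_of_dvd hdvd' hi₀
    have h3 := hdeg i₀
    rw [← hPdeg i₀] at h3
    exact absurd (lt_of_le_of_lt this h3) (lt_irrefl _)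
  have hS_eq : (∑ i, qs i * c i) = (∑ i, qs i * D i) * r := by
    rw [Finset.sum_mul]
    apply Finset.sum_congr rfl
    intro i _
    rw [hcD i, mul_assoc]
  constructor
  · rw [hS_eq]
    exact mul_ne_zero hT hr0
  · intro _
    have hbot : (⊥ : WithBot ℕ) < q.degree := by
      rw [bot_lt_iff_ne_bot]
      simpa [Polynomial.degree_eq_bot] using hq
    refine lt_of_le_of_lt (Polynomial.degree_sum_le _ _) ?_
    rw [Finset.sup_lt_iff hbot]
    intro i _
    by_cases hqs : qs i = 0
    · simpa [hqs] using hbot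
    · have hc0 : c i ≠ 0 := by
        intro h; rw [hc i, h, mul_zero] at hq; exact hq rfl
      rw [Polynomial.degree_mul, hc i, Polynomial.degree_mul]
      have h3 : (qs i).degree < (P i).degree := by rw [hPdeg i]; exact hdeg i
      exact WithBot.add_lt_add_right (by simpa [Polynomial.degree_eq_bot] using hc0) h3
end
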